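/- Let μ be a probability measure on ℝ^d and let q ∈ (2, ∞). For any real-valued function u ∈ L^q(μ), setting ū := ∫ u dμ, one has (∫|u|^q dμ)^{2/q} ≤ |ū|² + (q−1) (∫|u − ū|^q dμ)^{2/q}. -/

import Mathlib

/-!
Write `v = u - ū` and `ψ t = ∫ |ū + t v|^q`. Differentiating twice under the integral sign,
`ψ' 0 = q |ū|^(q-2) ū ∫ v = 0`, and Hölder's inequality with exponents `q/(q-2)` and `q/2` gives
`ψ'' ≤ q (q-1) ψ^(1-2/q) ‖v‖_q²`. Since `2/q ≤ 1`, this yields `(ψ^(2/q))'' ≤ 2 (q-1) ‖v‖_q²`,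
and a second-order Taylor bound at `0` evaluated at `t = 1` is the claim.
-/

open MeasureTheory Real Filter
open scoped ENNReal RealInnerProductSpace

noncomputable section

/-- Euclidean space `ℝ^d`. -/
abbrev Ed (d : ℕ) : Type := EuclideanSpace ℝ (Fin d)

/-- `u ∈ H¹(μ)`: `u` is (weakly) differentiable with `u` and `|∇u|` in `L²(μ)`. -/
def MemH1 {d : ℕ} (μ : Measure (Ed d)) (u : Ed d → ℝ) : Prop :=
  Differentiable ℝ u ∧ MemLp u 2 μ ∧ MemLp (fun x => ‖fderiv ℝ u x‖) 2 μ

/-- The generalized Poincaré (convex Sobolev) inequality with exponent `p` and constant `C`. -/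
def GenPoincare {d : ℕ} (μ : Measure (Ed d)) (p C : ℝ) : Prop :=
  ∀ u : Ed d → ℝ, MemH1 μ u →
    1 / (p - 1) * ((∫ x, u x ^ 2 ∂μ) - (∫ x, |u x| ^ (2 / p) ∂μ) ^ p)
      ≤ C * ∫ x, ‖fderiv ℝ u x‖ ^ 2 ∂μ

/-- The Poincaré (spectral gap) inequality with constant `C`. -/
def Poincare {d : ℕ} (μ : Measure (Ed d)) (C : ℝ) : Prop :=
  ∀ u : Ed d → ℝ, MemH1 μ u →
    (∫ x, (u x - ∫ y, u y ∂μ) ^ 2 ∂μ) ≤ C * ∫ x, ‖fderiv ℝ u x‖ ^ 2 ∂μ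

/-- The (tight) logarithmic Sobolev inequality with constant `C`. -/
def LogSob {d : ℕ} (μ : Measure (Ed d)) (C : ℝ) : Prop :=
  ∀ u : Ed d → ℝ, MemH1 μ u →
    (∫ x, u x ^ 2 * Real.log (u x ^ 2 / ∫ y, u y ^ 2 ∂μ) ∂μ)
      ≤ C * ∫ x, ‖fderiv ℝ u x‖ ^ 2 ∂μ

/-- The Laplacian `ΔZ = ∑ᵢ ∂²Z/∂xᵢ²`. -/
def lap {d : ℕ} (Z : Ed d → ℝ) (x : Ed d) : ℝ :=
  ∑ i : Fin d,
    fderiv ℝ (fun y => fderiv ℝ Z y (EuclideanSpace.single i 1)) x (EuclideanSpace.single i 1)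

/-- The `L^r(ν)` norm `(∫ |Z|^r dν)^{1/r}`. -/
def Lnorm {d : ℕ} (ν : Measure (Ed d)) (r : ℝ) (Z : Ed d → ℝ) : ℝ :=
  (∫ x, |Z x| ^ r ∂ν) ^ (1 / r)

open Topology

theorem hasDerivAt_abs_rpow_mul_self {p : ℝ} (hp : 0 < p) (y : ℝ) :
    HasDerivAt (fun y : ℝ => |y| ^ p * y) ((p + 1) * |y| ^ p) y := by
  rcases eq_or_ne y 0 with rfl | hy
  · rw [hasDerivAt_iff_tendsto_slope]
    have hslope : ∀ᶠ h in 𝓝[≠] (0 : ℝ), |h| ^ p = slope (fun y : ℝ => |y| ^ p * y) 0 h := by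
      filter_upwards [self_mem_nhdsWithin] with h (hh : h ≠ 0)
      simp [slope_def_field, hh]
    have hcont : Tendsto (fun h : ℝ => |h| ^ p) (𝓝 0) (𝓝 ((p + 1) * |(0 : ℝ)| ^ p)) := by
      have := ((continuous_abs.rpow_const fun _ => Or.inr hp.le).tendsto 0)
      simpa [Real.zero_rpow hp.ne'] using this
    exact (hcont.mono_left nhdsWithin_le_nhds).congr' hslope
  · have h := ((hasDerivAt_abs hy).rpow_const (p := p) (Or.inl (abs_ne_zero.2 hy))).mul
      (hasDerivAt_id y)
    refine h.congr_deriv ?_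
    have hsign : (SignType.sign y : ℝ) * y = |y| := sign_mul_self y
    rw [id, rpow_sub_one (abs_ne_zero.2 hy) p]
    field_simp
    linear_combination p * hsign

theorem abs_rpow_sub_two_mul_mul_le {q g w x y : ℝ} (hq : 2 ≤ q) (hw : |w| ≤ g) (hx : |x| ≤ g)
    (hy : |y| ≤ g) : |w| ^ (q - 2) * |x| * |y| ≤ g ^ q := by
  have hg : 0 ≤ g := (abs_nonneg w).trans hw
  calc |w| ^ (q - 2) * |x| * |y| ≤ g ^ (q - 2) * g * g := by gcongr
    _ = g ^ q := by
      rw [mul_assoc, ← sq, ← rpow_natCast, ← rpow_add' hg (by push_cast; linarith)]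
      norm_num

theorem abs_add_mul_le_envelope {c t T x : ℝ} (ht : |t| ≤ T) :
    |c + t * x| ≤ |c| + T * |x| :=
  (abs_add_le _ _).trans (by rw [abs_mul]; gcongr)

theorem abs_le_envelope {c T x : ℝ} (hT : 1 ≤ T) : |x| ≤ |c| + T * |x| := by
  nlinarith [abs_nonneg c, abs_nonneg x]

theorem le_add_half_of_deriv2_le {f f' f'' : ℝ → ℝ} {K : ℝ} (hf : ∀ t, HasDerivAt f (f' t) t)
    (hf' : ∀ t, HasDerivAt f' (f'' t) t) (h0 : f' 0 = 0) (hK : ∀ t, f'' t ≤ K) :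
    f 1 ≤ f 0 + K / 2 := by
  have hf'_le : ∀ t, 0 ≤ t → f' t ≤ K * t := by
    have : Antitone fun t => f' t - K * t :=
      antitone_of_hasDerivAt_nonpos (fun t => (hf' t).sub ((hasDerivAt_id t).const_mul K))
        (fun t => by simpa using hK t)
    intro t ht
    simpa [h0] using this ht
  have hG : ∀ t, HasDerivAt (fun t => f t - K / 2 * t ^ 2) (f' t - K * t) t := fun t =>
    ((hf t).sub ((hasDerivAt_pow 2 t).const_mul (K / 2))).congr_deriv (by ring)
  have : AntitoneOn (fun t => f t - K / 2 * t ^ 2) (Set.Icc 0 1) :=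
    antitoneOn_of_hasDerivWithinAt_nonpos (convex_Icc 0 1)
      (fun t _ => (hG t).continuousAt.continuousWithinAt) (fun t _ => (hG t).hasDerivWithinAt)
      (fun t ht => by
        rw [interior_Icc] at ht
        linarith [hf'_le t ht.1.le])
  have := this (by simp) (by simp) zero_le_one
  norm_num at this
  linarith

theorem rpow_le_of_deriv2_le_mul_rpow {ψ ψ' ψ'' : ℝ → ℝ} {s M : ℝ} (hs₀ : 0 ≤ s) (hs₁ : s ≤ 1)
    (hpos : ∀ t, 0 < ψ t) (hψ : ∀ t, HasDerivAt ψ (ψ' t) t)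
    (hψ' : ∀ t, HasDerivAt ψ' (ψ'' t) t) (h0 : ψ' 0 = 0) (hM : ∀ t, ψ'' t ≤ M * ψ t ^ (1 - s)) :
    ψ 1 ^ s ≤ ψ 0 ^ s + s * M / 2 := by
  have hd : ∀ t, HasDerivAt (fun t => ψ t ^ s) (s * ψ t ^ (s - 1) * ψ' t) t := fun t =>
    ((hψ t).rpow_const (Or.inl (hpos t).ne')).congr_deriv (by ring)
  have hd' : ∀ t, HasDerivAt (fun t => s * ψ t ^ (s - 1) * ψ' t)
      (s * ((s - 1) * ψ t ^ (s - 1 - 1) * ψ' t ^ 2 + ψ t ^ (s - 1) * ψ'' t)) t := fun t =>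
    ((((hψ t).rpow_const (p := s - 1) (Or.inl (hpos t).ne')).const_mul s).mul
      (hψ' t)).congr_deriv (by ring)
  refine le_add_half_of_deriv2_le hd hd' (by simp [h0]) fun t => ?_
  have hψ't : (s - 1) * ψ t ^ (s - 1 - 1) * ψ' t ^ 2 ≤ 0 :=
    mul_nonpos_of_nonpos_of_nonneg
      (mul_nonpos_of_nonpos_of_nonneg (by linarith) (rpow_nonneg (hpos t).le _)) (sq_nonneg _)
  have hψ''t : ψ t ^ (s - 1) * ψ'' t ≤ M :=
    calc ψ t ^ (s - 1) * ψ'' t ≤ ψ t ^ (s - 1) * (M * ψ t ^ (1 - s)) := by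
          gcongr
          exacts [rpow_nonneg (hpos t).le _, hM t]
      _ = M := by rw [mul_left_comm, ← rpow_add (hpos t)]; simp
  exact mul_le_mul_of_nonneg_left (by linarith) hs₀

section LineIntegrals

variable {α : Type*} [MeasurableSpace α] {μ : Measure α}

theorem MeasureTheory.MemLp.integrable_abs_rpow {q : ℝ} (hq : 0 < q) {f : α → ℝ}
    (hf : MemLp f (ENNReal.ofReal q) μ) : Integrable (fun a => |f a| ^ q) μ := by
  simpa [Real.norm_eq_abs, ENNReal.toReal_ofReal hq.le] using
    hf.integrable_norm_rpow (by simpa using hq) ENNReal.ofReal_ne_top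

theorem integral_abs_rpow_pos_of_integral_ne_zero {q : ℝ} (hq : 0 < q) {f : α → ℝ}
    (hf : Integrable (fun a => |f a| ^ q) μ) (h : ∫ a, f a ∂μ ≠ 0) :
    0 < ∫ a, |f a| ^ q ∂μ := by
  refine (integral_nonneg fun a => by positivity).lt_of_ne fun h0 => h ?_
  have hzero := (integral_eq_zero_iff_of_nonneg (fun a => by positivity) hf).1 h0.symm
  refine integral_eq_zero_of_ae ?_
  filter_upwards [hzero] with a ha
  simpa [rpow_eq_zero_iff_of_nonneg, hq.ne'] using ha

theorem integral_abs_rpow_sub_two_mul_sq_le {q : ℝ} (hq : 2 < q) {w v : α → ℝ}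
    (hw : MemLp w (ENNReal.ofReal q) μ) (hv : MemLp v (ENNReal.ofReal q) μ) :
    ∫ a, |w a| ^ (q - 2) * v a ^ 2 ∂μ ≤
      (∫ a, |w a| ^ q ∂μ) ^ (1 - 2 / q) * (∫ a, |v a| ^ q ∂μ) ^ (2 / q) := by
  have hq₂ : 0 < q - 2 := by linarith
  have hpq : (q / (q - 2)).HolderConjugate (q / 2) := by
    rw [Real.holderConjugate_iff]
    refine ⟨by rw [lt_div_iff₀ hq₂]; linarith, by field_simp; ring⟩
  have hw' : MemLp (fun a => |w a| ^ (q - 2)) (ENNReal.ofReal (q / (q - 2))) μ := by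
    have h := hw.norm_rpow_div (ENNReal.ofReal (q - 2))
    rw [ENNReal.toReal_ofReal hq₂.le, ← ENNReal.ofReal_div_of_pos hq₂] at h
    simpa only [Real.norm_eq_abs] using h
  have hv' : MemLp (fun a => v a ^ 2) (ENNReal.ofReal (q / 2)) μ := by
    have h := hv.norm_rpow_div (ENNReal.ofReal 2)
    rw [ENNReal.toReal_ofReal zero_le_two, ← ENNReal.ofReal_div_of_pos two_pos] at h
    simpa only [Real.norm_eq_abs, rpow_two, sq_abs] using h
  have h := integral_mul_le_Lp_mul_Lq_of_nonneg hpq (ae_of_all _ fun a => by positivity)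
    (ae_of_all _ fun a => by positivity) hw' hv'
  convert h using 3
  · refine integral_congr_ae (ae_of_all _ fun a => ?_)
    dsimp only
    rw [← rpow_mul (abs_nonneg _)]
    field_simp
  · field_simp
  · refine integral_congr_ae (ae_of_all _ fun a => ?_)
    dsimp only
    rw [← sq_abs, ← rpow_two, ← rpow_mul (abs_nonneg _)]
    ring_nf
  · rw [one_div_div]

theorem hasDerivAt_integral_of_abs_le_envelope [IsFiniteMeasure μ] {q K c t₀ : ℝ} (hq : 0 < q)
    {v : α → ℝ} (hv : MemLp v (ENNReal.ofReal q) μ) {F F' : ℝ → α → ℝ}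
    (hF : ∀ t, AEStronglyMeasurable (F t) μ) (hF₀ : Integrable (F t₀) μ)
    (hF' : AEStronglyMeasurable (F' t₀) μ) (hderiv : ∀ t a, HasDerivAt (F · a) (F' t a) t)
    (hbound : ∀ T, 1 ≤ T → ∀ t, |t| ≤ T → ∀ a, |F' t a| ≤ K * (|c| + T * |v a|) ^ q) :
    Integrable (F' t₀) μ ∧ HasDerivAt (fun t => ∫ a, F t a ∂μ) (∫ a, F' t₀ a ∂μ) t₀ := by
  set T := |t₀| + 1
  have hT : 1 ≤ T := by simp [T]
  have henv : Integrable (fun a => K * (|c| + T * |v a|) ^ q) μ := by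
    have := ((memLp_const |c|).add (hv.abs.const_mul T)).integrable_abs_rpow hq
    refine (this.congr (Eventually.of_forall fun a => ?_)).const_mul K
    simp only [Pi.add_apply, Pi.abs_apply]
    rw [abs_of_nonneg (by positivity)]
  refine hasDerivAt_integral_of_dominated_loc_of_deriv_le (Metric.ball_mem_nhds t₀ one_pos)
    (Eventually.of_forall hF) hF₀ hF' (Eventually.of_forall fun a t ht => ?_) henv
    (Eventually.of_forall fun a t _ => hderiv t a)
  refine hbound T hT t ?_ a
  have := abs_sub_abs_le_abs_sub t t₀
  rw [Metric.mem_ball, dist_eq] at ht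
  simp only [T]
  linarith

section FiniteMeasure

variable [IsFiniteMeasure μ] {q c : ℝ} {v : α → ℝ}

theorem hasDerivAt_integral_abs_add_mul_rpow (hq : 2 < q) (hv : MemLp v (ENNReal.ofReal q) μ)
    (t₀ : ℝ) :
    Integrable (fun a => q * |c + t₀ * v a| ^ (q - 2) * (c + t₀ * v a) * v a) μ ∧
      HasDerivAt (fun t => ∫ a, |c + t * v a| ^ q ∂μ)
        (∫ a, q * |c + t₀ * v a| ^ (q - 2) * (c + t₀ * v a) * v a ∂μ) t₀ := by
  have hvm := hv.aestronglyMeasurable.aemeasurable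
  refine hasDerivAt_integral_of_abs_le_envelope (K := q) (c := c) (by linarith) hv
    (F := fun t a => |c + t * v a| ^ q)
    (F' := fun t a => q * |c + t * v a| ^ (q - 2) * (c + t * v a) * v a)
    (fun t => (by fun_prop : AEMeasurable _ μ).aestronglyMeasurable) ?_
    (by fun_prop : AEMeasurable _ μ).aestronglyMeasurable (fun t a => ?_) (fun T hT t ht a => ?_)
  · exact ((memLp_const c).add (hv.const_mul t₀)).integrable_abs_rpow (by linarith)
  · exact ((hasDerivAt_abs_rpow _ (by linarith)).comp t
      (((hasDerivAt_id t).mul_const (v a)).const_add c)).congr_deriv (by simp)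
  · calc |q * |c + t * v a| ^ (q - 2) * (c + t * v a) * v a|
        = q * (|c + t * v a| ^ (q - 2) * |c + t * v a| * |v a|) := by
          rw [abs_mul, abs_mul, abs_mul, abs_of_pos (by linarith : 0 < q),
            abs_of_nonneg (by positivity)]
          ring
      _ ≤ q * (|c| + T * |v a|) ^ q := by
          gcongr
          exact abs_rpow_sub_two_mul_mul_le hq.le (abs_add_mul_le_envelope ht)
            (abs_add_mul_le_envelope ht) (abs_le_envelope hT)

theorem hasDerivAt_integral_abs_add_mul_rpow_deriv (hq : 2 < q)
    (hv : MemLp v (ENNReal.ofReal q) μ) (t₀ : ℝ) :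
    HasDerivAt (fun t => ∫ a, q * |c + t * v a| ^ (q - 2) * (c + t * v a) * v a ∂μ)
      (∫ a, q * (q - 1) * (|c + t₀ * v a| ^ (q - 2) * v a ^ 2) ∂μ) t₀ := by
  have hvm := hv.aestronglyMeasurable.aemeasurable
  refine (hasDerivAt_integral_of_abs_le_envelope (K := q * (q - 1)) (c := c) (by linarith) hv
    (F := fun t a => q * |c + t * v a| ^ (q - 2) * (c + t * v a) * v a)
    (F' := fun t a => q * (q - 1) * (|c + t * v a| ^ (q - 2) * v a ^ 2))
    (fun t => (by fun_prop : AEMeasurable _ μ).aestronglyMeasurable)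
    (hasDerivAt_integral_abs_add_mul_rpow hq hv t₀).1
    (by fun_prop : AEMeasurable _ μ).aestronglyMeasurable
    (fun t a => ?_) (fun T hT t ht a => ?_)).2
  · have h := (((hasDerivAt_abs_rpow_mul_self (by linarith : 0 < q - 2) _).comp t
      (((hasDerivAt_id t).mul_const (v a)).const_add c)).const_mul q).mul_const (v a)
    refine (h.congr_deriv ?_).congr_of_eventuallyEq (Eventually.of_forall fun s => ?_)
    · simp only [id, one_mul]; ring
    · simp only [Function.comp, id]; ring
  · calc |q * (q - 1) * (|c + t * v a| ^ (q - 2) * v a ^ 2)|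
        = q * (q - 1) * (|c + t * v a| ^ (q - 2) * |v a| * |v a|) := by
          rw [abs_mul, abs_of_pos (by nlinarith : 0 < q * (q - 1)), abs_mul,
            abs_of_nonneg (by positivity), abs_pow, sq]
          ring
      _ ≤ q * (q - 1) * (|c| + T * |v a|) ^ q := by
          have : 0 ≤ q * (q - 1) := by nlinarith
          gcongr
          exact abs_rpow_sub_two_mul_mul_le hq.le (abs_add_mul_le_envelope ht)
            (abs_le_envelope hT) (abs_le_envelope hT)

end FiniteMeasure

theorem rpow_integral_abs_add_rpow_le [IsProbabilityMeasure μ] {q : ℝ} (hq : 2 < q) {v : α → ℝ}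
    (hv : MemLp v (ENNReal.ofReal q) μ) (hmean : ∫ a, v a ∂μ = 0) (c : ℝ) :
    (∫ a, |c + v a| ^ q ∂μ) ^ (2 / q) ≤ |c| ^ 2 + (q - 1) * (∫ a, |v a| ^ q ∂μ) ^ (2 / q) := by
  have hq₀ : 0 < q := by linarith
  rcases eq_or_ne c 0 with rfl | hc
  · have : 0 ≤ (∫ a, |v a| ^ q ∂μ) ^ (2 / q) := by positivity
    simp only [zero_add, abs_zero]
    nlinarith
  have hline : ∀ t, MemLp (fun a => c + t * v a) (ENNReal.ofReal q) μ := fun t =>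
    (memLp_const c).add (hv.const_mul t)
  have hv₁ : Integrable v μ := hv.integrable (ENNReal.one_le_ofReal.2 (by linarith))
  have hpos : ∀ t, 0 < ∫ a, |c + t * v a| ^ q ∂μ := fun t =>
    integral_abs_rpow_pos_of_integral_ne_zero hq₀ ((hline t).integrable_abs_rpow hq₀) <| by
      rw [integral_add (integrable_const c) (hv₁.const_mul t), integral_const_mul, hmean]
      simpa using hc
  have hderiv0 : ∫ a, q * |c + 0 * v a| ^ (q - 2) * (c + 0 * v a) * v a ∂μ = 0 := by
    simp [integral_const_mul, hmean]
  have hbound : ∀ t, ∫ a, q * (q - 1) * (|c + t * v a| ^ (q - 2) * v a ^ 2) ∂μ ≤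
      q * (q - 1) * (∫ a, |v a| ^ q ∂μ) ^ (2 / q) * (∫ a, |c + t * v a| ^ q ∂μ) ^ (1 - 2 / q) := by
    intro t
    rw [integral_const_mul]
    exact (mul_le_mul_of_nonneg_left (integral_abs_rpow_sub_two_mul_sq_le hq (hline t) hv)
      (by nlinarith)).trans_eq (by ring)
  have h := rpow_le_of_deriv2_le_mul_rpow (by positivity) (div_le_one_of_le₀ (by linarith) hq₀.le)
    hpos (fun t => (hasDerivAt_integral_abs_add_mul_rpow hq hv t).2)
    (hasDerivAt_integral_abs_add_mul_rpow_deriv hq hv) hderiv0 hbound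
  have hψ₀ : (∫ a, |c + 0 * v a| ^ q ∂μ) ^ (2 / q) = |c| ^ 2 := by
    simp only [zero_mul, add_zero, integral_const, probReal_univ, one_smul]
    rw [← rpow_mul (abs_nonneg c), mul_div_cancel₀ _ hq₀.ne', rpow_two]
  simp only [one_mul, hψ₀] at h
  refine h.trans_eq ?_
  field_simp

end LineIntegrals

/-- **Remark 2.** For `q ∈ (2,∞)` and `u ∈ L^q(μ)` with mean `ū`,
`(∫|u|^q dμ)^{2/q} ≤ |ū|² + (q−1)(∫|u−ū|^q dμ)^{2/q}`. -/
theorem mean_moment_upper_bound_q_gt_two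
    (d : ℕ) (μ : Measure (Ed d)) (hμ : IsProbabilityMeasure μ)
    (q : ℝ) (hq : q ∈ Set.Ioi (2 : ℝ))
    (u : Ed d → ℝ) (huq : MemLp u (ENNReal.ofReal q) μ)
    (ubar : ℝ) (hubar : ubar = ∫ x, u x ∂μ) :
    (∫ x, |u x| ^ q ∂μ) ^ (2 / q)
      ≤ |ubar| ^ 2 + (q - 1) * (∫ x, |u x - ubar| ^ q ∂μ) ^ (2 / q) := by
  have hq₂ : 2 < q := hq
  have hu₁ : Integrable u μ := huq.integrable (ENNReal.one_le_ofReal.2 (by linarith))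
  have hmean : ∫ x, (u x - ubar) ∂μ = 0 := by
    rw [integral_sub hu₁ (integrable_const ubar), ← hubar]
    simp
  simpa using rpow_integral_abs_add_rpow_le hq₂ (huq.sub (memLp_const ubar)) hmean ubar
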